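/- In a time-dependent graph whose weights are all nonnegative and satisfy the FIFO property, for every walk p from s to d and every departure time t there exists a walk q from s to d with no repeated vertices such that cost(q, t) ≤ cost(p, t). Consequently, the shortest travel cost f s d (t) equals the infimum of cost over duplicate-free walks, and when V is finite this infimum is attained as a minimum. -/

import Mathlib

/-- The travel cost of a walk (a nonempty list of vertices) when departing at time `t`:
`cost([x], t) = 0` and `cost(x :: y :: rest, t) = w x y t + cost(y :: rest, t + w x y t)`. -/
def tdCost {V : Type*} (w : V → V → ℝ → ℝ) : List V → ℝ → ℝ
  | [], _ => 0
  | [_], _ => 0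
  | x :: y :: rest, t => w x y t + tdCost w (y :: rest) (t + w x y t)

/-- `p` is a walk from `s` to `d`: a nonempty finite sequence of vertices
starting at `s` and ending at `d`. -/
def IsTDWalk {V : Type*} (p : List V) (s d : V) : Prop :=
  p ≠ [] ∧ p.head? = some s ∧ p.getLast? = some d

/-- The shortest travel cost function:
`f s d t = inf { cost(p, t) : p a walk from s to d }`. -/
noncomputable def tdShortest {V : Type*} (w : V → V → ℝ → ℝ) (s d : V) (t : ℝ) : ℝ :=
  sInf {c | ∃ p : List V, IsTDWalk p s d ∧ tdCost w p t = c}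

theorem tdCost_nonneg {V : Type*} (w : V → V → ℝ → ℝ) (hnn : ∀ a b t, 0 ≤ w a b t) :
    ∀ (p : List V) (t : ℝ), 0 ≤ tdCost w p t
  | [], _ => le_refl 0
  | [_], _ => le_refl 0
  | x :: y :: r, t => add_nonneg (hnn x y t) (tdCost_nonneg w hnn (y :: r) _)

theorem tdArrival_mono {V : Type*} (w : V → V → ℝ → ℝ)
    (hfifo : ∀ a b, Monotone fun t => t + w a b t) :
    ∀ (p : List V), Monotone fun t => t + tdCost w p t
  | [] => fun a b h => by simpa [tdCost] using h
  | [x] => fun a b h => by simpa [tdCost] using h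
  | x :: y :: r => by
    have h := (tdArrival_mono w hfifo (y :: r)).comp (hfifo x y)
    simpa [tdCost, Function.comp_def, add_assoc] using h

theorem tdCost_append {V : Type*} (w : V → V → ℝ → ℝ) :
    ∀ (l : List V) (x : V) (m : List V) (t : ℝ),
      tdCost w (l ++ x :: m) t
        = tdCost w (l ++ [x]) t + tdCost w (x :: m) (t + tdCost w (l ++ [x]) t)
  | [], x, m, t => by simp [tdCost]
  | [a], x, m, t => by simp [tdCost]
  | a :: b :: l, x, m, t => by
    have ih := tdCost_append w (b :: l) x m (t + w a b t)
    simp only [List.cons_append, tdCost, List.append_eq] at *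
    rw [ih, add_assoc, add_assoc]

theorem tdCost_shortcut {V : Type*} (w : V → V → ℝ → ℝ)
    (hnn : ∀ a b t, 0 ≤ w a b t) (hfifo : ∀ a b, Monotone fun t => t + w a b t)
    (a : List V) (x : V) (b c : List V) (t : ℝ) :
    tdCost w (a ++ x :: c) t ≤ tdCost w (a ++ x :: (b ++ x :: c)) t := by
  rw [tdCost_append w a x c t, tdCost_append w a x (b ++ x :: c) t]
  set t' := t + tdCost w (a ++ [x]) t with ht'
  have key : tdCost w (x :: c) t' ≤ tdCost w (x :: (b ++ x :: c)) t' := by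
    have hsplit : tdCost w ((x :: b) ++ x :: c) t'
        = tdCost w ((x :: b) ++ [x]) t'
          + tdCost w (x :: c) (t' + tdCost w ((x :: b) ++ [x]) t') :=
      tdCost_append w (x :: b) x c t'
    have h1 : 0 ≤ tdCost w ((x :: b) ++ [x]) t' := tdCost_nonneg w hnn _ _
    have h2 : t' + tdCost w (x :: c) t'
        ≤ (t' + tdCost w ((x :: b) ++ [x]) t')
          + tdCost w (x :: c) (t' + tdCost w ((x :: b) ++ [x]) t') :=
      tdArrival_mono w hfifo (x :: c) (by linarith)
    have : x :: (b ++ x :: c) = (x :: b) ++ x :: c := by simp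
    rw [this, hsplit]; linarith
  linarith

theorem exists_dup_decomp {V : Type*} :
    ∀ (p : List V), ¬ p.Nodup → ∃ (a : List V) (x : V) (b c : List V),
      p = a ++ x :: (b ++ x :: c)
  | [], h => absurd List.nodup_nil h
  | x :: l, h => by
    by_cases hx : x ∈ l
    · obtain ⟨b, c, rfl⟩ := List.append_of_mem hx
      exact ⟨[], x, b, c, rfl⟩
    · have hl : ¬ l.Nodup := by
        intro hnd; exact h (List.nodup_cons.mpr ⟨hx, hnd⟩)
      obtain ⟨a, y, b, c, rfl⟩ := exists_dup_decomp l hl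
      exact ⟨x :: a, y, b, c, rfl⟩

theorem tdReduce {V : Type*} (w : V → V → ℝ → ℝ)
    (hnn : ∀ a b t, 0 ≤ w a b t) (hfifo : ∀ a b, Monotone fun t => t + w a b t)
    (s d : V) :
    ∀ (n : ℕ) (p : List V), p.length ≤ n → ∀ t : ℝ, IsTDWalk p s d →
      ∃ q : List V, IsTDWalk q s d ∧ q.Nodup ∧ tdCost w q t ≤ tdCost w p t := by
  intro n
  induction n with
  | zero =>
    intro p hp t hw
    exact absurd (List.length_eq_zero_iff.mp (Nat.le_zero.mp hp)) hw.1
  | succ n ih =>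
    intro p hp t hw
    by_cases hnd : p.Nodup
    · exact ⟨p, hw, hnd, le_refl _⟩
    · obtain ⟨a, x, b, c, rfl⟩ := exists_dup_decomp p hnd
      set q := a ++ x :: c with hq
      have hwq : IsTDWalk q s d := by
        obtain ⟨hne, hh, hl⟩ := hw
        have key : ∀ (l : List V), (l ++ (x :: c)).getLast? = (x :: c).getLast? := by
          intro l
          rw [List.getLast?_append]
          cases h : (x :: c).getLast? with
          | none => simp at h
          | some y => simp
        refine ⟨by simp [hq], ?_, ?_⟩
        · cases a <;> simpa [hq] using hh
        · have h1 : (a ++ x :: (b ++ x :: c)).getLast? = (x :: c).getLast? := by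
            rw [show a ++ x :: (b ++ x :: c) = (a ++ x :: b) ++ (x :: c) by simp, key]
          have h2 : q.getLast? = (x :: c).getLast? := key a
          rw [h2, ← h1]; exact hl
      have hlen : q.length ≤ n := by
        have := hp
        simp [hq, List.length_append] at this ⊢
        omega
      obtain ⟨r, hr1, hr2, hr3⟩ := ih q hlen t hwq
      exact ⟨r, hr1, hr2, le_trans hr3 (tdCost_shortcut w hnn hfifo a x b c t)⟩

theorem tdShortest_main {V : Type*} (w : V → V → ℝ → ℝ)
    (hnn : ∀ a b t, 0 ≤ w a b t)
    (hfifo : ∀ a b, Monotone fun t => t + w a b t)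
    (s d : V) :
    (∀ (p : List V) (t : ℝ), IsTDWalk p s d →
        ∃ q : List V, IsTDWalk q s d ∧ q.Nodup ∧ tdCost w q t ≤ tdCost w p t) ∧
    (∀ t : ℝ,
        sInf {c | ∃ p : List V, IsTDWalk p s d ∧ tdCost w p t = c} =
          sInf {c | ∃ q : List V, IsTDWalk q s d ∧ q.Nodup ∧ tdCost w q t = c}) ∧
    (Finite V → (∃ p : List V, IsTDWalk p s d) → ∀ t : ℝ,
        ∃ q : List V, IsTDWalk q s d ∧ q.Nodup ∧ tdCost w q t =
          sInf {c | ∃ p : List V, IsTDWalk p s d ∧ tdCost w p t = c}) := by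
  have part1 : ∀ (p : List V) (t : ℝ), IsTDWalk p s d →
      ∃ q, IsTDWalk q s d ∧ q.Nodup ∧ tdCost w q t ≤ tdCost w p t := fun p t hp =>
    tdReduce w hnn hfifo s d p.length p le_rfl t hp
  have part2 : ∀ t : ℝ,
      sInf {c | ∃ p : List V, IsTDWalk p s d ∧ tdCost w p t = c} =
        sInf {c | ∃ q : List V, IsTDWalk q s d ∧ q.Nodup ∧ tdCost w q t = c} := by
    intro t
    by_cases hS : {c | ∃ p : List V, IsTDWalk p s d ∧ tdCost w p t = c}.Nonempty
    · have hbdd : BddBelow {c | ∃ p : List V, IsTDWalk p s d ∧ tdCost w p t = c} :=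
        ⟨0, fun c hc => by obtain ⟨p, _, rfl⟩ := hc; exact tdCost_nonneg w hnn p t⟩
      have hbdd' : BddBelow {c | ∃ q : List V, IsTDWalk q s d ∧ q.Nodup ∧ tdCost w q t = c} :=
        ⟨0, fun c hc => by obtain ⟨p, _, _, rfl⟩ := hc; exact tdCost_nonneg w hnn p t⟩
      obtain ⟨c, p, hp, rfl⟩ := hS
      obtain ⟨q, hq, hnd, hle⟩ := part1 p t hp
      apply le_antisymm
      · exact csInf_le_csInf hbdd ⟨_, q, hq, hnd, rfl⟩
          (fun c hc => by obtain ⟨q', h1, _, h3⟩ := hc; exact ⟨q', h1, h3⟩)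
      · refine le_csInf ⟨_, p, hp, rfl⟩ ?_
        rintro b ⟨p', hp', rfl⟩
        obtain ⟨q', hq', hnd', hle'⟩ := part1 p' t hp'
        exact (csInf_le hbdd' ⟨q', hq', hnd', rfl⟩).trans hle'
    · have hS' : ¬ {c | ∃ q : List V, IsTDWalk q s d ∧ q.Nodup ∧ tdCost w q t = c}.Nonempty :=
        fun ⟨c, q, hq, _, hc⟩ => hS ⟨c, q, hq, hc⟩
      rw [Set.not_nonempty_iff_eq_empty.mp hS, Set.not_nonempty_iff_eq_empty.mp hS']
  refine ⟨part1, part2, ?_⟩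
  intro hfin ⟨p, hp⟩ t
  haveI := Fintype.ofFinite V
  have hTfin : {q : List V | IsTDWalk q s d ∧ q.Nodup}.Finite :=
    Set.Finite.subset (List.finite_length_le V (Fintype.card V))
      (fun q hq => hq.2.length_le_card)
  have hS'fin : {c | ∃ q : List V, IsTDWalk q s d ∧ q.Nodup ∧ tdCost w q t = c}.Finite := by
    have : {c | ∃ q : List V, IsTDWalk q s d ∧ q.Nodup ∧ tdCost w q t = c}
        = (fun q => tdCost w q t) '' {q : List V | IsTDWalk q s d ∧ q.Nodup} := by
      ext c
      constructor
      · rintro ⟨q, h1, h2, h3⟩; exact ⟨q, ⟨h1, h2⟩, h3⟩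
      · rintro ⟨q, ⟨h1, h2⟩, h3⟩; exact ⟨q, h1, h2, h3⟩
    rw [this]; exact hTfin.image _
  obtain ⟨q0, hq0, hnd0, _⟩ := part1 p t hp
  have hne : {c | ∃ q : List V, IsTDWalk q s d ∧ q.Nodup ∧ tdCost w q t = c}.Nonempty :=
    ⟨_, q0, hq0, hnd0, rfl⟩
  obtain ⟨q, hq, hnd, hc⟩ := hne.csInf_mem hS'fin
  exact ⟨q, hq, hnd, by rw [hc, part2 t]⟩

/-- **Duplicate-free walks suffice under nonnegative FIFO weights.**
(1) Every walk `p` from `s` to `d` can be replaced, for each departure time `t`, by a walk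
`q` with no repeated vertices of no larger cost; (2) consequently `f s d t` equals the
infimum of the cost over duplicate-free walks; and (3) when `V` is finite and a walk from
`s` to `d` exists, this infimum is attained as a minimum by a duplicate-free walk. -/
theorem tdShortest_nodup {V : Type*} (w : V → V → ℝ → ℝ)
    (hnn : ∀ a b t, 0 ≤ w a b t)
    (hfifo : ∀ a b, Monotone fun t => t + w a b t)
    (s d : V) :
    (∀ (p : List V) (t : ℝ), IsTDWalk p s d →
        ∃ q : List V, IsTDWalk q s d ∧ q.Nodup ∧ tdCost w q t ≤ tdCost w p t) ∧
    (∀ t : ℝ,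
        tdShortest w s d t =
          sInf {c | ∃ q : List V, IsTDWalk q s d ∧ q.Nodup ∧ tdCost w q t = c}) ∧
    (Finite V → (∃ p : List V, IsTDWalk p s d) → ∀ t : ℝ,
        ∃ q : List V, IsTDWalk q s d ∧ q.Nodup ∧ tdCost w q t = tdShortest w s d t) := by
  exact tdShortest_main w hnn hfifo s d
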